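/- arXiv:1401.0926 — 5 statements merged into one kernel-verified Lean document; each statement's English description precedes it below -/
import Mathlib

section
/- Let A be an n×n real matrix and L an m×m real matrix. For all but finitely many positive real numbers α, the matrix W = I_m - αL has the property that every nonzero eigenvalue λ of W ⊗ A (Kronecker product) can be uniquely expressed as a product λ = λ_W · λ_A with λ_W an eigenvalue of W and λ_A an eigenvalue of A. -/
open Matrix Kronecker

noncomputable section

/-- Complexification of a real matrix. -/
def cmat {ι : Type*} (M : Matrix ι ι ℝ) : Matrix ι ι ℂ :=
  M.map (algebraMap ℝ ℂ)

/-- `μ` is a (complex) eigenvalue of the square matrix `M`. -/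
def IsEig {ι : Type*} [Fintype ι] (M : Matrix ι ι ℂ) (μ : ℂ) : Prop :=
  ∃ v : ι → ℂ, v ≠ 0 ∧ M.mulVec v = μ • v

/-- Unique Eigenvalue Product Property for the Kronecker product `W ⊗ A`. -/
def UEPP {m n : ℕ} (W : Matrix (Fin m) (Fin m) ℂ) (A : Matrix (Fin n) (Fin n) ℂ) : Prop :=
  ∀ lam : ℂ, lam ≠ 0 → IsEig (W ⊗ₖ A) lam →
    (∃ μ ν : ℂ, IsEig W μ ∧ IsEig A ν ∧ lam = μ * ν) ∧
    (∀ μ ν μ' ν' : ℂ, IsEig W μ → IsEig A ν → IsEig W μ' → IsEig A ν' →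
      lam = μ * ν → lam = μ' * ν' → μ = μ' ∧ ν = ν')

/-! The factors `1 ⊗ A` and `W ⊗ 1` of `W ⊗ A` commute with it, so a common eigenvector of
`W ⊗ A` and `W ⊗ 1` is an eigenvector of `1 ⊗ A` too, and every nonzero eigenvalue of `W ⊗ A`
factors as `μ ν`. For `W = 1 - αL` the eigenvalues of `W` are `1 - αℓ` with `ℓ` in the finite
spectrum of `L`, and two products `(1 - αℓ)ν`, `(1 - αℓ')ν'` from distinct pairs with nonzero
product agree for at most one `α`, the condition being affine in `α`. -/
namespace Module.End

theorem exists_hasEigenvector_of_commute {K V : Type*} [Field K] [IsAlgClosed K] [AddCommGroup V]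
    [Module K V] [FiniteDimensional K V] {f g : End K V} (hfg : Commute f g) {a : K}
    (ha : f.HasEigenvalue a) : ∃ b v, f.HasEigenvector a v ∧ g.HasEigenvector b v := by
  have hmaps : ∀ v ∈ f.eigenspace a, g v ∈ f.eigenspace a := mapsTo_genEigenspace_of_comm hfg a 1
  have : Nontrivial (f.eigenspace a) := Submodule.nontrivial_iff_ne_bot.mpr ha
  obtain ⟨b, hb⟩ := exists_eigenvalue (g.restrict hmaps)
  obtain ⟨w, hw, hw0⟩ := hb.exists_hasEigenvector
  refine ⟨b, w, ⟨w.2, by simpa using hw0⟩, ?_, by simpa using hw0⟩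
  have := congrArg Subtype.val (mem_eigenspace_iff.mp hw)
  simpa [LinearMap.restrict_apply] using this

end Module.End

section

variable {ι κ : Type*} [Fintype ι] [Fintype κ]

lemma isEig_iff_exists_hasEigenvector [DecidableEq ι] {M : Matrix ι ι ℂ} {μ : ℂ} :
    IsEig M μ ↔ ∃ v, Module.End.HasEigenvector (toLin' M) μ v := by
  simp only [IsEig, Module.End.hasEigenvector_iff, Module.End.mem_eigenspace_iff, toLin'_apply]
  exact exists_congr fun v => and_comm

lemma isEig_iff_mem_spectrum [DecidableEq ι] {M : Matrix ι ι ℂ} {μ : ℂ} :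
    IsEig M μ ↔ μ ∈ spectrum ℂ M := by
  rw [isEig_iff_exists_hasEigenvector, ← spectrum_toLin',
    ← Module.End.hasEigenvalue_iff_mem_spectrum]
  exact ⟨fun ⟨_, hv⟩ => Module.End.hasEigenvalue_of_hasEigenvector hv,
    Module.End.HasEigenvalue.exists_hasEigenvector⟩

lemma finite_setOf_isEig [DecidableEq ι] (M : Matrix ι ι ℂ) : {μ | IsEig M μ}.Finite :=
  M.finite_spectrum.subset fun _ => isEig_iff_mem_spectrum.mp

lemma IsEig.of_kronecker_one [DecidableEq κ] {W : Matrix ι ι ℂ} {μ : ℂ}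
    (h : IsEig (W ⊗ₖ (1 : Matrix κ κ ℂ)) μ) : IsEig W μ := by
  obtain ⟨v, hv, hWv⟩ := h
  obtain ⟨⟨i, j⟩, hij⟩ := Function.ne_iff.mp hv
  refine ⟨fun k => v (k, j), Function.ne_iff.mpr ⟨i, hij⟩, funext fun k => ?_⟩
  simpa [mulVec, dotProduct, Fintype.sum_prod_type, one_apply] using congrFun hWv (k, j)

lemma IsEig.of_one_kronecker [DecidableEq ι] {A : Matrix κ κ ℂ} {ν : ℂ}
    (h : IsEig ((1 : Matrix ι ι ℂ) ⊗ₖ A) ν) : IsEig A ν := by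
  obtain ⟨v, hv, hAv⟩ := h
  obtain ⟨⟨i, j⟩, hij⟩ := Function.ne_iff.mp hv
  refine ⟨fun l => v (i, l), Function.ne_iff.mpr ⟨j, hij⟩, funext fun l => ?_⟩
  simpa [mulVec, dotProduct, Fintype.sum_prod_type, one_apply] using congrFun hAv (i, l)

end

section

variable {ι κ : Type*} [Fintype ι] [Fintype κ] [DecidableEq ι] [DecidableEq κ]

theorem IsEig.exists_eq_mul_of_kronecker {W : Matrix ι ι ℂ} {A : Matrix κ κ ℂ} {lam : ℂ}
    (hlam : lam ≠ 0) (h : IsEig (W ⊗ₖ A) lam) :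
    ∃ μ ν : ℂ, IsEig W μ ∧ IsEig A ν ∧ lam = μ * ν := by
  have hWA : W ⊗ₖ A = (1 ⊗ₖ A) * (W ⊗ₖ (1 : Matrix κ κ ℂ)) := by
    rw [← mul_kronecker_mul, one_mul, mul_one]
  have hcomm : Commute (W ⊗ₖ A) (W ⊗ₖ (1 : Matrix κ κ ℂ)) := by
    rw [Commute, SemiconjBy, ← mul_kronecker_mul, ← mul_kronecker_mul, mul_one, one_mul]
  obtain ⟨μ, v, hWAv, hWv⟩ := Module.End.exists_hasEigenvector_of_commute
    (hcomm.map Matrix.toLinAlgEquiv')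
    (Module.End.hasEigenvalue_of_hasEigenvector (isEig_iff_exists_hasEigenvector.mp h).choose_spec)
  have hv : v ≠ 0 := hWAv.2
  have hμA : lam • v = μ • ((1 ⊗ₖ A) *ᵥ v) :=
    calc lam • v = (W ⊗ₖ A) *ᵥ v := hWAv.apply_eq_smul.symm
      _ = (1 ⊗ₖ A) *ᵥ ((W ⊗ₖ 1) *ᵥ v) := by rw [hWA, mulVec_mulVec]
      _ = μ • ((1 ⊗ₖ A) *ᵥ v) := by rw [← mulVec_smul]; exact congrArg _ hWv.apply_eq_smul
  have hμ : μ ≠ 0 := by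
    rintro rfl
    rw [zero_smul, smul_eq_zero] at hμA
    exact hμA.elim hlam hv
  have hAv : (1 ⊗ₖ A) *ᵥ v = (lam / μ) • v := by
    rw [div_eq_inv_mul, ← smul_smul, hμA, inv_smul_smul₀ hμ]
  exact ⟨μ, lam / μ, IsEig.of_kronecker_one ⟨v, hv, hWv.apply_eq_smul⟩,
    IsEig.of_one_kronecker ⟨v, hv, hAv⟩, (mul_div_cancel₀ _ hμ).symm⟩

end

lemma IsEig.exists_eq_one_sub_mul {ι : Type*} [Fintype ι] [DecidableEq ι] {M : Matrix ι ι ℂ}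
    {c μ : ℂ} (hc : c ≠ 0) (h : IsEig (1 - c • M) μ) : ∃ ℓ, IsEig M ℓ ∧ μ = 1 - c * ℓ := by
  obtain ⟨v, hv, hMv⟩ := h
  rw [sub_mulVec, one_mulVec, smul_mulVec] at hMv
  refine ⟨(1 - μ) / c, ⟨v, hv, ?_⟩, by field_simp; ring⟩
  rw [div_eq_inv_mul, ← smul_smul, sub_smul, one_smul, ← hMv, sub_sub_cancel, inv_smul_smul₀ hc]

lemma cmat_one_sub_smul {ι : Type*} [DecidableEq ι] (L : Matrix ι ι ℝ) (α : ℝ) :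
    cmat (1 - α • L) = 1 - (α : ℂ) • cmat L := by
  ext i j
  simp [cmat, one_apply, apply_ite]

lemma UEPP.of_unique {m n : ℕ} {W : Matrix (Fin m) (Fin m) ℂ} {A : Matrix (Fin n) (Fin n) ℂ}
    (h : ∀ μ ν μ' ν' : ℂ, IsEig W μ → IsEig A ν → IsEig W μ' → IsEig A ν' →
      μ * ν ≠ 0 → μ * ν = μ' * ν' → μ = μ' ∧ ν = ν') :
    UEPP W A := fun _ hlam hW =>
  ⟨hW.exists_eq_mul_of_kronecker hlam, fun μ ν μ' ν' hμ hν hμ' hν' h₁ h₂ =>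
    h μ ν μ' ν' hμ hν hμ' hν' (h₁ ▸ hlam) (h₁.symm.trans h₂)⟩

-- Two eigenvalue products `(1 - c ℓ) ν = (1 - c ℓ') ν'` coincide iff `ν - ν' = c (ℓ ν - ℓ' ν')`.
lemma exists_collision_of_not_uepp {m n : ℕ} {M : Matrix (Fin m) (Fin m) ℂ}
    {A : Matrix (Fin n) (Fin n) ℂ} {c : ℂ} (hc : c ≠ 0) (h : ¬ UEPP (1 - c • M) A) :
    ∃ ℓ ν ℓ' ν', IsEig M ℓ ∧ IsEig A ν ∧ IsEig M ℓ' ∧ IsEig A ν' ∧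
      ¬(ν - ν' = 0 ∧ ℓ * ν - ℓ' * ν' = 0) ∧ ν - ν' = c * (ℓ * ν - ℓ' * ν') := by
  by_contra hcol
  refine h (UEPP.of_unique fun μ ν μ' ν' hμ hν hμ' hν' h0 heq => ?_)
  obtain ⟨ℓ, hℓ, rfl⟩ := hμ.exists_eq_one_sub_mul hc
  obtain ⟨ℓ', hℓ', rfl⟩ := hμ'.exists_eq_one_sub_mul hc
  by_cases hdeg : ν - ν' = 0 ∧ ℓ * ν - ℓ' * ν' = 0
  · obtain ⟨hν, hℓν⟩ := hdeg
    rw [sub_eq_zero] at hν hℓν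
    subst hν
    have hℓ : ℓ = ℓ' := mul_right_cancel₀ (right_ne_zero_of_mul h0) hℓν
    exact ⟨by rw [hℓ], rfl⟩
  · exact (hcol ⟨ℓ, ν, ℓ', ν', hℓ, hν, hℓ', hν', hdeg, by linear_combination heq⟩).elim

lemma subsingleton_setOf_eq_ofReal_mul {a b : ℂ} (h : ¬(a = 0 ∧ b = 0)) :
    {α : ℝ | a = α * b}.Subsingleton := by
  intro α hα β hβ
  by_cases hb : b = 0
  · simp_all
  · exact_mod_cast mul_right_cancel₀ hb (hα.symm.trans hβ)

/-- For all but finitely many positive reals `α`, the matrix `W = I - αL` is such that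
`W ⊗ A` satisfies the UEPP. -/
theorem stmt0 (n m : ℕ) (A : Matrix (Fin n) (Fin n) ℝ) (L : Matrix (Fin m) (Fin m) ℝ) :
    {α : ℝ | 0 < α ∧ ¬ UEPP (cmat ((1 : Matrix (Fin m) (Fin m) ℝ) - α • L)) (cmat A)}.Finite := by
  set E := {ℓ | IsEig (cmat L) ℓ} ×ˢ {ν | IsEig (cmat A) ν}
  have hE : E.Finite := (finite_setOf_isEig _).prod (finite_setOf_isEig _)
  refine (((hE.prod hE).sep fun p =>
      ¬(p.1.2 - p.2.2 = 0 ∧ p.1.1 * p.1.2 - p.2.1 * p.2.2 = 0)).biUnion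
    fun p hp => (subsingleton_setOf_eq_ofReal_mul hp.2).finite).subset ?_
  rintro α ⟨hα, hbad⟩
  rw [cmat_one_sub_smul] at hbad
  obtain ⟨ℓ, ν, ℓ', ν', hℓ, hν, hℓ', hν', hdeg, heq⟩ :=
    exists_collision_of_not_uepp (Complex.ofReal_ne_zero.mpr hα.ne') hbad
  exact Set.mem_biUnion (x := ((ℓ, ν), (ℓ', ν'))) ⟨⟨⟨hℓ, hν⟩, hℓ', hν'⟩, hdeg⟩ heq

end
end

section
/- Let W ∈ ℝ^{m×m} be a matrix all of whose (complex) eigenvalues are simple (algebraic multiplicity 1), and let A ∈ ℝ^{n×n}. Suppose W ⊗ A satisfies the UEPP. Then every eigenvector q of W ⊗ A associated with a nonzero eigenvalue λ can be written as a Kronecker product q = v ⊗ p, where v is an eigenvector of W for λ_W and p is an eigenvector of A for λ_A, with λ = λ_W · λ_A the unique factorization of λ. -/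
open Matrix Kronecker

noncomputable section

/-! Since the eigenvalues `μ i` of `W` are distinct, `W` has a basis of eigenvectors `v i`,
and every `q` expands as `q = ∑ i, v i ⊗ t i`. Applying `W ⊗ A` and comparing coefficients in
this basis gives `μ i • A t i = λ • t i`, so every nonzero `t i` is an eigenvector of `A` for
`λ / μ i`, and `λ = μ i * (λ / μ i)` is a factorization into eigenvalues. By the UEPP these
factorizations coincide, and as `μ` is injective only one `t i` is nonzero. -/

open Polynomial

theorem isEig_of_isRoot_charpoly {ι : Type*} [Fintype ι] [DecidableEq ι] {M : Matrix ι ι ℂ}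
    {μ : ℂ} (h : M.charpoly.IsRoot μ) : IsEig M μ := by
  rw [← Matrix.charpoly_toLin', ← Module.End.hasEigenvalue_iff_isRoot_charpoly] at h
  obtain ⟨v, hv, hv0⟩ := h.exists_hasEigenvector
  exact ⟨v, hv0, by simpa using Module.End.mem_eigenspace_iff.1 hv⟩

theorem charpoly_roots_nodup {ι : Type*} [Fintype ι] [DecidableEq ι] {M : Matrix ι ι ℂ}
    (hsimple : ∀ μ : ℂ, IsEig M μ → M.charpoly.rootMultiplicity μ = 1) :
    M.charpoly.roots.Nodup := by
  refine Multiset.nodup_iff_count_le_one.2 fun μ => ?_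
  rw [count_roots]
  by_cases hμ : M.charpoly.IsRoot μ
  · exact (hsimple μ (isEig_of_isRoot_charpoly hμ)).le
  · simp [rootMultiplicity_eq_zero hμ]

section

variable {K ι κ : Type*} [Field K] [Fintype ι] [DecidableEq ι] [Fintype κ]

theorem Matrix.exists_linearIndependent_eigenvectors {M : Matrix ι ι K}
    (hsplit : M.charpoly.Splits) (hnodup : M.charpoly.roots.Nodup) :
    ∃ (μ : ι → K) (v : ι → ι → K), Function.Injective μ ∧ (∀ i, M *ᵥ v i = μ i • v i) ∧
      LinearIndependent K v := by
  classical
  have hcard : Fintype.card ι = Fintype.card M.charpoly.roots.toFinset := by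
    rw [Fintype.card_coe, Multiset.toFinset_card_of_nodup hnodup,
      ← hsplit.natDegree_eq_card_roots, charpoly_natDegree_eq_dim]
  let e := Fintype.equivOfCardEq hcard
  have hroot : ∀ i, Module.End.HasEigenvalue M.toLin' (e i) := fun i => by
    rw [Module.End.hasEigenvalue_iff_isRoot_charpoly, charpoly_toLin']
    exact isRoot_of_mem_roots (Multiset.mem_toFinset.1 (e i).2)
  choose v hv using fun i => (hroot i).exists_hasEigenvector
  refine ⟨fun i => e i, v, Subtype.val_injective.comp e.injective, fun i => ?_,
    Module.End.eigenvectors_linearIndependent' _ _ (Subtype.val_injective.comp e.injective) v hv⟩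
  simpa using Module.End.mem_eigenspace_iff.1 (hv i).1

theorem Matrix.mulVec_eq_div_smul_of_smul_mulVec_eq {A : Matrix κ κ K} {t : κ → K} {c lam : K}
    (hlam : lam ≠ 0) (ht : t ≠ 0) (h : c • A *ᵥ t = lam • t) : c ≠ 0 ∧ A *ᵥ t = (lam / c) • t := by
  have hc : c ≠ 0 := by
    rintro rfl
    exact ht ((smul_eq_zero.1 (h.symm.trans (zero_smul K _))).resolve_left hlam)
  refine ⟨hc, ?_⟩
  rw [div_eq_inv_mul, mul_smul, ← h, inv_smul_smul₀ hc]

theorem Matrix.exists_expansion_of_kronecker_mulVec_eq_smul {W : Matrix ι ι K}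
    {A : Matrix κ κ K} {μ : ι → K} {v : ι → ι → K} (hv : LinearIndependent K v)
    (hW : ∀ i, W *ᵥ v i = μ i • v i)
    {lam : K} {q : ι × κ → K} (hq : (W ⊗ₖ A) *ᵥ q = lam • q) :
    ∃ t : ι → κ → K, (∀ i, μ i • A *ᵥ t i = lam • t i) ∧
      q = ∑ i, fun x => v i x.1 * t i x.2 := by
  set V : Matrix ι ι K := of v
  have hV : IsUnit V.det := (isUnit_iff_isUnit_det V).1 (linearIndependent_rows_iff_isUnit.1 hv)
  have hVW : V * Wᵀ = diagonal μ * V := by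
    ext i k
    rw [diagonal_mul]
    simpa [mul_apply, mulVec, dotProduct, mul_comm, V] using congrFun (hW i) k
  -- Reshaped into the matrix `X`, the eigen-equation reads `A X Wᵀ = λ X`, and the basis change
  -- `X = S V` turns `Wᵀ` into `diagonal μ`; the columns of `S` are the `t i`.
  set X : Matrix κ ι K := of fun j k => q (k, j)
  have hX : A * X * Wᵀ = lam • X := by
    rw [← vec_inj, ← kronecker_mulVec_vec, vec_smul]
    exact hq
  set S := X * V⁻¹
  have hXS : X = S * V := (nonsing_inv_mul_cancel_right V X hV).symm
  have hS : A * S * diagonal μ = lam • S :=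
    calc A * S * diagonal μ = A * S * diagonal μ * V * V⁻¹ :=
          (mul_nonsing_inv_cancel_right V _ hV).symm
      _ = A * (S * V) * Wᵀ * V⁻¹ := by simp only [Matrix.mul_assoc, ← hVW]
      _ = lam • S := by rw [← hXS, hX, hXS, Matrix.smul_mul, mul_nonsing_inv_cancel_right V _ hV]
  refine ⟨fun i j => S j i, fun i => ?_, ?_⟩
  · ext j
    have := congrFun₂ hS j i
    rw [mul_diagonal, Matrix.smul_apply] at this
    simpa [mul_apply, mulVec, dotProduct, mul_comm, Finset.mul_sum] using this
  · ext ⟨k, j⟩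
    simpa [mul_apply, mul_comm, X, V] using congrFun₂ hXS j k

end

/-- If all eigenvalues of `W` are simple and `W ⊗ A` satisfies the UEPP, then every
eigenvector of `W ⊗ A` for a nonzero eigenvalue `λ` is a Kronecker product `v ⊗ p` of
eigenvectors of `W` and `A` for the unique factorization `λ = λ_W · λ_A`. -/
theorem stmt2 (m n : ℕ) (W : Matrix (Fin m) (Fin m) ℝ) (A : Matrix (Fin n) (Fin n) ℝ)
    (hsimple : ∀ μ : ℂ, IsEig (cmat W) μ → (cmat W).charpoly.rootMultiplicity μ = 1)
    (huepp : UEPP (cmat W) (cmat A)) :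
    ∀ lam : ℂ, lam ≠ 0 →
      ∀ q : Fin m × Fin n → ℂ, q ≠ 0 → (cmat W ⊗ₖ cmat A).mulVec q = lam • q →
        ∃ (lamW lamA : ℂ) (v : Fin m → ℂ) (p : Fin n → ℂ),
          v ≠ 0 ∧ p ≠ 0 ∧
          (cmat W).mulVec v = lamW • v ∧ (cmat A).mulVec p = lamA • p ∧
          lam = lamW * lamA ∧ q = fun x => v x.1 * p x.2 := by
  intro lam hlam q hq0 hq
  obtain ⟨μ, v, hμ, hv, hli⟩ :=
    exists_linearIndependent_eigenvectors (IsAlgClosed.splits _) (charpoly_roots_nodup hsimple)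
  have hqeig : IsEig (cmat W ⊗ₖ cmat A) lam := ⟨q, hq0, hq⟩
  obtain ⟨t, ht, rfl⟩ := exists_expansion_of_kronecker_mulVec_eq_smul hli hv hq
  have hrow i (hi : t i ≠ 0) : μ i ≠ 0 ∧ cmat A *ᵥ t i = (lam / μ i) • t i :=
    mulVec_eq_div_smul_of_smul_mulVec_eq hlam hi (ht i)
  have hfactor i (hi : t i ≠ 0) : lam = μ i * (lam / μ i) := by field_simp [(hrow i hi).1]
  have hunique i j (hi : t i ≠ 0) (hj : t j ≠ 0) : i = j :=
    hμ ((huepp lam hlam hqeig).2 _ _ _ _ ⟨v i, hli.ne_zero i, hv i⟩ ⟨t i, hi, (hrow i hi).2⟩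
      ⟨v j, hli.ne_zero j, hv j⟩ ⟨t j, hj, (hrow j hj).2⟩ (hfactor i hi) (hfactor j hj)).1
  obtain ⟨i₀, hi₀⟩ : ∃ i, t i ≠ 0 := by
    by_contra! h
    exact hq0 (Finset.sum_eq_zero fun i _ => by ext; simp [h])
  refine ⟨μ i₀, lam / μ i₀, v i₀, t i₀, hli.ne_zero i₀, hi₀, hv i₀, (hrow i₀ hi₀).2,
    hfactor i₀ hi₀, ?_⟩
  refine Finset.sum_eq_single i₀ (fun i _ hne => ?_) (by simp)
  have hti : t i = 0 := not_ne_iff.1 fun hi => hne (hunique i i₀ hi hi₀)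
  ext x
  simp [hti]
end
end

section
/- Let l₁, …, l_m ∈ ℝ^m be fixed vectors and define, for positive scalars α₁, …, α_m, the matrix L(α) whose i-th row is α_i l_iᵀ. Suppose for some choice α₁,…,α_k > 0 the matrix with rows α₁l₁ᵀ,…,α_k l_kᵀ and remaining rows zero has all eigenvalues simple except for the eigenvalue 0. Then for all sufficiently small α_{k+1} > 0, the matrix with rows α₁l₁ᵀ,…,α_{k+1} l_{k+1}ᵀ and remaining rows zero also has all nonzero eigenvalues simple. -/
/-!
Putting `β lₖᵀ` into the zero row `k` changes the characteristic polynomial affinely: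
by multilinearity of the determinant in row `k`, `χ_β = P + β Q` with `P` the old characteristic
polynomial and `deg Q < deg P`. If `μ` is a double root of `P + β Q` but not of `P`, then `μ` is a
root of the Wronskian `P Q' - P' Q` and `β` is determined by `μ`. The Wronskian is nonzero since
`P` and `Q` have different degrees, so only finitely many `β` create a new multiple root, and all
small enough positive `β` avoid them.
-/

open Matrix

noncomputable section

/-- All nonzero eigenvalues of `M` are simple (algebraic multiplicity one). -/
def SimpleNonzeroEigs {ι : Type*} [Fintype ι] [DecidableEq ι] (M : Matrix ι ι ℂ) : Prop :=
  ∀ μ : ℂ, μ ≠ 0 → IsEig M μ → M.charpoly.rootMultiplicity μ = 1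

open Polynomial

namespace Polynomial

variable {K : Type*} [Field K] [CharZero K]

theorem wronskian_ne_zero_of_natDegree_lt {P Q : K[X]} (hQ : Q ≠ 0)
    (hPQ : Q.natDegree < P.natDegree) : wronskian P Q ≠ 0 := by
  have hP : P ≠ 0 := by rintro rfl; simp at hPQ
  intro hW
  have hlc := congrArg leadingCoeff (sub_eq_zero.mp hW)
  simp only [leadingCoeff_mul, leadingCoeff_derivative] at hlc
  have : (Q.natDegree : K) = P.natDegree := by
    have hP' := leadingCoeff_ne_zero.mpr hP
    have hQ' := leadingCoeff_ne_zero.mpr hQ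
    apply mul_left_cancel₀ (mul_ne_zero hP' hQ')
    linear_combination hlc
  exact hPQ.ne (by exact_mod_cast this)

theorem finite_setOf_multipleRoot_add_C_mul {P Q : K[X]} (hPQ : Q.degree < P.degree) :
    {β : K | ∃ μ, (P + C β * Q).IsRoot μ ∧ (derivative (P + C β * Q)).IsRoot μ ∧
      ¬(P.IsRoot μ ∧ (derivative P).IsRoot μ)}.Finite := by
  obtain rfl | hQ := eq_or_ne Q 0
  · refine Set.finite_empty.subset ?_
    rintro β ⟨μ, h₀, h₁, hP⟩
    simp_all
  have hW := wronskian_ne_zero_of_natDegree_lt hQ (natDegree_lt_natDegree hQ hPQ)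
  classical
  refine ((finite_setOfPred_isRoot hW).image fun μ =>
    if Q.eval μ = 0 then -(derivative P).eval μ / (derivative Q).eval μ
    else -P.eval μ / Q.eval μ).subset ?_
  rintro β ⟨μ, h₀, h₁, hP⟩
  simp only [IsRoot, derivative_add, derivative_C_mul, eval_add, eval_mul, eval_C] at h₀ h₁ hP
  refine ⟨μ, ?_, ?_⟩
  · simp only [Set.mem_ofPred_eq, IsRoot, wronskian, eval_sub, eval_mul]
    linear_combination (derivative Q).eval μ * h₀ - Q.eval μ * h₁
  · dsimp only
    split_ifs with hQμ
    · have hQ'μ : (derivative Q).eval μ ≠ 0 := fun h =>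
        hP ⟨by simpa [hQμ] using h₀, by simpa [h] using h₁⟩
      rw [div_eq_iff hQ'μ]; linear_combination -h₁
    · rw [div_eq_iff hQμ]; linear_combination -h₀

end Polynomial

theorem exists_pos_forall_ofReal_notMem_of_finite {S : Set ℂ} (hS : S.Finite) :
    ∃ ε > 0, ∀ β : ℝ, 0 < β → β < ε → (β : ℂ) ∉ S := by
  have hT : (Complex.ofReal ⁻¹' S).Finite := hS.preimage Complex.ofReal_injective.injOn
  have hT₀ : ∀ᶠ β in nhds (0 : ℝ), β ∉ Complex.ofReal ⁻¹' S \ {0} :=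
    hT.sdiff.isClosed.compl_mem_nhds (by simp)
  have : ∀ᶠ β in nhdsWithin (0 : ℝ) (Set.Ioi 0), β ∉ Complex.ofReal ⁻¹' S :=
    eventually_nhdsWithin_iff.mpr <| hT₀.mono fun β hβS hβ hβ' => hβS ⟨hβ', ne_of_gt hβ⟩
  obtain ⟨ε, hε, h⟩ := (nhdsGT_basis (0 : ℝ)).eventually_iff.mp this
  exact ⟨ε, hε, fun β h₀ h₁ => h ⟨h₀, h₁⟩⟩

theorem Matrix.charpoly_updateRow_add_smul {n R : Type*} [Fintype n] [DecidableEq n] [CommRing R]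
    [Nontrivial R] (M : Matrix n n R) (i : n) (v : n → R) :
    ∃ Q : R[X], Q.degree < M.charpoly.degree ∧
      ∀ β : R, (M.updateRow i (M i + β • v)).charpoly = M.charpoly + C β * Q := by
  set Q := ((charmatrix M).updateRow i fun j => -C (v j)).det
  have hQ (β : R) : (M.updateRow i (M i + β • v)).charpoly = M.charpoly + C β * Q := by
    have : charmatrix (M.updateRow i (M i + β • v)) =
        (charmatrix M).updateRow i (charmatrix M i + C β • fun j => -C (v j)) := by
      ext a b
      rcases eq_or_ne a i with rfl | ha
      · by_cases hab : a = b <;> simp [hab] <;> ring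
      · simp [charmatrix_apply, ha]
    rw [charpoly, this, det_updateRow_add, det_updateRow_smul, updateRow_eq_self, ← charpoly]
  refine ⟨Q, ?_, hQ⟩
  have hQ₁ : Q = (M.updateRow i (M i + v)).charpoly - M.charpoly := by
    simpa using (sub_eq_of_eq_add' (hQ 1)).symm
  rw [hQ₁]
  refine (degree_sub_lt_left ?_ (charpoly_monic _).ne_zero ?_).trans_eq ?_ <;>
    simp [charpoly_degree_eq_dim, (charpoly_monic _).leadingCoeff]

section

variable {n : Type*} [Fintype n] [DecidableEq n]

theorem isEig_iff_isRoot_charpoly (M : Matrix n n ℂ) (μ : ℂ) :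
    IsEig M μ ↔ M.charpoly.IsRoot μ := by
  rw [IsRoot, eval_charpoly, ← exists_mulVec_eq_zero_iff]
  refine exists_congr fun v => and_congr_right fun _ => ?_
  rw [sub_mulVec, sub_eq_zero, scalar_apply, ← smul_one_eq_diagonal, smul_mulVec, one_mulVec,
    eq_comm]

theorem simpleNonzeroEigs_iff (M : Matrix n n ℂ) :
    SimpleNonzeroEigs M ↔
      ∀ μ ≠ 0, ¬(M.charpoly.IsRoot μ ∧ (derivative M.charpoly).IsRoot μ) := by
  have hM : M.charpoly ≠ 0 := M.charpoly_monic.ne_zero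
  refine forall₂_congr fun μ _ => ?_
  rw [isEig_iff_isRoot_charpoly, ← one_lt_rootMultiplicity_iff_isRoot hM]
  constructor
  · intro h hlt
    have := h ((rootMultiplicity_pos hM).mp (by omega))
    omega
  · intro h hroot
    have := (rootMultiplicity_pos hM).mpr hroot
    omega

end

theorem stmt9_general (m k : ℕ) (hk : k < m) (l : Fin m → Fin m → ℝ) (α : Fin m → ℝ)
    (h0 : SimpleNonzeroEigs
      (cmat (Matrix.of fun i j : Fin m => if (i : ℕ) < k then α i * l i j else 0))) :
    ∃ ε > (0 : ℝ), ∀ β : ℝ, 0 < β → β < ε →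
      SimpleNonzeroEigs
        (cmat (Matrix.of fun i j : Fin m =>
          if (i : ℕ) < k then α i * l i j
          else if (i : ℕ) = k then β * l ⟨k, hk⟩ j else 0)) := by
  set M₀ := cmat (Matrix.of fun i j : Fin m => if (i : ℕ) < k then α i * l i j else 0)
  set v : Fin m → ℂ := fun j => l ⟨k, hk⟩ j
  obtain ⟨Q, hQdeg, hQ⟩ := M₀.charpoly_updateRow_add_smul ⟨k, hk⟩ v
  obtain ⟨ε, hε, hεS⟩ :=
    exists_pos_forall_ofReal_notMem_of_finite (finite_setOf_multipleRoot_add_C_mul hQdeg)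
  refine ⟨ε, hε, fun β hβ hβε => ?_⟩
  have hrow : cmat (Matrix.of fun i j : Fin m =>
      if (i : ℕ) < k then α i * l i j else if (i : ℕ) = k then β * l ⟨k, hk⟩ j else 0) =
      M₀.updateRow ⟨k, hk⟩ (M₀ ⟨k, hk⟩ + (β : ℂ) • v) := by
    ext i j
    rcases eq_or_ne i ⟨k, hk⟩ with rfl | hi
    · simp [M₀, v, cmat]
    · have hik : (i : ℕ) ≠ k := fun h => hi (Fin.ext h)
      simp [M₀, cmat, hi, hik]
  rw [simpleNonzeroEigs_iff] at h0
  rw [hrow, simpleNonzeroEigs_iff, hQ]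
  exact fun μ hμ hμ₂ => hεS β hβ hβε ⟨μ, hμ₂.1, hμ₂.2, h0 μ hμ⟩

/-- Inductive step: if the matrix with rows `α₁l₁ᵀ,…,α_k l_kᵀ` (and remaining rows zero)
has all nonzero eigenvalues simple, then for all sufficiently small `α_{k+1} > 0`, so does
the matrix with rows `α₁l₁ᵀ,…,α_{k+1}l_{k+1}ᵀ` and remaining rows zero. -/
theorem stmt9 (m k : ℕ) (hk : k < m) (l : Fin m → Fin m → ℝ) (α : Fin m → ℝ)
    (hα : ∀ i : Fin m, (i : ℕ) < k → 0 < α i)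
    (h0 : SimpleNonzeroEigs
      (cmat (Matrix.of fun i j : Fin m => if (i : ℕ) < k then α i * l i j else 0))) :
    ∃ ε > (0 : ℝ), ∀ β : ℝ, 0 < β → β < ε →
      SimpleNonzeroEigs
        (cmat (Matrix.of fun i j : Fin m =>
          if (i : ℕ) < k then α i * l i j
          else if (i : ℕ) = k then β * l ⟨k, hk⟩ j else 0)) :=
  stmt9_general m k hk l α h0
end
end

section
/- Let A ∈ ℝ^{n×n}, W₁ ∈ ℝ^{m₁×m₁}, and let H̄ be the block-diagonal-style measurement matrix with block rows H̄_i = e_iᵀ ⊗ H_i for matrices H_i ∈ ℝ^{r_i×n}. Suppose: (a) every eigenvalue λ of W₁ ⊗ A with |λ| ≥ 1 has all its eigenvectors of the form v ⊗ p with v an eigenvector of W₁ having no zero entries and p an eigenvector of A for an eigenvalue λ_A with |λ_A| ≥ 1; and (b) the pair (A, H) with H the vertical stack of H₁,…,H_{m₁} is detectable, i.e., rank([A − λ_A I; H]) = n for every λ_A with |λ_A| ≥ 1. Then for every λ with |λ| ≥ 1, rank([W₁ ⊗ A − λ I_{m₁n}; H̄]) = m₁·n. -/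
open Matrix Kronecker

noncomputable section

/-! A vector `q` in the kernel of the stacked matrix is an unstable eigenvector of `W₁ ⊗ A`, so by
(a) it factors as `v ⊗ p`. Observer `i` then reads `v i • H_i p = 0`, and since `v i ≠ 0`, all
`H_i p` vanish. Hence `p` is an unstable eigenvector of `A` invisible to `H`, contradicting (b). -/

theorem Matrix.rank_eq_card_width_iff {K m n : Type*} [Field K] [Fintype m] [Fintype n]
    [DecidableEq n] (M : Matrix m n K) :
    M.rank = Fintype.card n ↔ ∀ x, M *ᵥ x = 0 → x = 0 := by
  have hrn := LinearMap.finrank_range_add_finrank_ker M.mulVecLin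
  rw [Module.finrank_fintype_fun_eq_card] at hrn
  rw [← ker_mulVecLin_eq_bot_iff, ← Submodule.finrank_eq_zero, Matrix.rank]
  omega

theorem Matrix.fromRows_sub_smul_one_mulVec_eq_zero_iff {R m n : Type*} [CommRing R]
    [Fintype n] [DecidableEq n] (A : Matrix n n R) (C : Matrix m n R) (μ : R) (x : n → R) :
    fromRows (A - μ • 1) C *ᵥ x = 0 ↔ A *ᵥ x = μ • x ∧ C *ᵥ x = 0 := by
  rw [fromRows_mulVec, ← Sum.elim_zero_zero, Sum.elim_eq_iff, sub_mulVec, smul_mulVec,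
    one_mulVec, sub_eq_zero]

theorem Matrix.blockRows_mulVec_kronecker {R ι κ : Type*} {ρ : ι → Type*} [CommSemiring R]
    [Fintype ι] [DecidableEq ι] [Fintype κ] (H : (i : ι) → Matrix (ρ i) κ R)
    (v : ι → R) (p : κ → R) :
    (of fun (x : Σ i, ρ i) (y : ι × κ) => if x.1 = y.1 then H x.1 x.2 y.2 else 0) *ᵥ
        (fun y => v y.1 * p y.2) = fun x => v x.1 * (H x.1 *ᵥ p) x.2 := by
  funext ⟨i, j⟩
  simp only [mulVec, dotProduct, of_apply, Fintype.sum_prod_type]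
  rw [Finset.sum_eq_single i (fun a _ hai => by simp [Ne.symm hai]) (by simp), Finset.mul_sum]
  simp only [if_pos, mul_left_comm]

/-- PBH detectability of the pair `(W₁ ⊗ A, H̄)` at unstable eigenvalues, where
`H̄` has block rows `e_iᵀ ⊗ H_i`, assuming (a) every unstable eigenvector of `W₁ ⊗ A`
is of the form `v ⊗ p` with `v` entrywise nonzero and `p` an unstable eigenvector of `A`,
and (b) the pair `(A, H)` is detectable. -/
theorem stmt15 (n m₁ : ℕ) (r : Fin m₁ → ℕ)
    (A : Matrix (Fin n) (Fin n) ℝ) (W₁ : Matrix (Fin m₁) (Fin m₁) ℝ)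
    (H : (i : Fin m₁) → Matrix (Fin (r i)) (Fin n) ℝ)
    (ha : ∀ lam : ℂ, 1 ≤ ‖lam‖ →
      ∀ q : Fin m₁ × Fin n → ℂ, q ≠ 0 →
        (cmat W₁ ⊗ₖ cmat A).mulVec q = lam • q →
        ∃ (v : Fin m₁ → ℂ) (p : Fin n → ℂ) (lamW lamA : ℂ),
          (∀ i, v i ≠ 0) ∧ p ≠ 0 ∧
          (cmat W₁).mulVec v = lamW • v ∧ (cmat A).mulVec p = lamA • p ∧
          1 ≤ ‖lamA‖ ∧ lam = lamW * lamA ∧ q = fun x => v x.1 * p x.2)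
    (hb : ∀ μ : ℂ, 1 ≤ ‖μ‖ →
      (Matrix.fromRows (cmat A - μ • (1 : Matrix (Fin n) (Fin n) ℂ))
        (Matrix.of fun (x : Σ i : Fin m₁, Fin (r i)) (j : Fin n) =>
          ((H x.1 x.2 j : ℝ) : ℂ))).rank = n) :
    ∀ lam : ℂ, 1 ≤ ‖lam‖ →
      (Matrix.fromRows ((cmat W₁ ⊗ₖ cmat A) - lam • (1 : Matrix (Fin m₁ × Fin n) (Fin m₁ × Fin n) ℂ))
        (Matrix.of fun (x : Σ i : Fin m₁, Fin (r i)) (y : Fin m₁ × Fin n) =>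
          if x.1 = y.1 then ((H x.1 x.2 y.2 : ℝ) : ℂ) else 0)).rank = m₁ * n := by
  intro lam hlam
  rw [show m₁ * n = Fintype.card (Fin m₁ × Fin n) by simp, rank_eq_card_width_iff]
  intro q hq
  by_contra hq0
  obtain ⟨hqeig, hqobs⟩ := (fromRows_sub_smul_one_mulVec_eq_zero_iff _ _ _ _).mp hq
  obtain ⟨v, p, -, lamA, hv, hp, -, hpeig, hlamA, -, rfl⟩ := ha lam hlam q hq0 hqeig
  have hobs : (fun x : Σ i, Fin (r i) => v x.1 * ((H x.1).map ((↑) : ℝ → ℂ) *ᵥ p) x.2) = 0 :=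
    (blockRows_mulVec_kronecker (fun i => (H i).map ((↑) : ℝ → ℂ)) v p).symm.trans hqobs
  have hHp : ∀ i j, ((H i).map ((↑) : ℝ → ℂ) *ᵥ p) j = 0 := fun i j =>
    (mul_eq_zero.mp (congrFun hobs ⟨i, j⟩)).resolve_left (hv i)
  refine hp ((rank_eq_card_width_iff _).mp (by rw [Fintype.card_fin]; exact hb lamA hlamA) p ?_)
  exact (fromRows_sub_smul_one_mulVec_eq_zero_iff _ _ _ _).mpr
    ⟨hpeig, funext fun x => hHp x.1 x.2⟩
end
end

section
/- Let A ∈ ℝ^{n×n} and suppose the pair (A, H) (H the vertical stack of H₁,…,H_m) is NOT detectable, i.e., there exists μ ∈ ℂ with |μ| ≥ 1 and a nonzero p ∈ ℂⁿ with Ap = μp and Hp = 0. Let W ∈ ℝ^{m×m} be any row-stochastic matrix (rows sum to 1). Then the pair (W ⊗ A, H̄), where H̄ has block rows e_iᵀ ⊗ H_i, is not detectable: the vector 𝟙 ⊗ p (with 𝟙 the all-ones vector) satisfies (W ⊗ A)(𝟙 ⊗ p) = μ(𝟙 ⊗ p) and H̄(𝟙 ⊗ p) = 0, and |μ| ≥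 1. -/
/-! The constant stack `𝟙 ⊗ p` is a pure tensor, on which `W ⊗ A` acts factorwise, so `W 𝟙 = 𝟙`
turns an eigenpair `(μ, p)` of `A` into the eigenpair `(μ, 𝟙 ⊗ p)` of `W ⊗ A`. Each block
row of `H̄` only sees the copy of `p` in its own slot, so `H̄ (𝟙 ⊗ p)` stacks the vectors `H_i p = 0`. -/

open Matrix Kronecker

noncomputable section

namespace Matrix

variable {ι n : Type*} [Fintype ι] [Fintype n] {R : Type*} [CommSemiring R]

theorem kronecker_mulVec_tmul {l l' : Type*} (W : Matrix l ι R) (A : Matrix l' n R)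
    (u : ι → R) (v : n → R) :
    (W ⊗ₖ A) *ᵥ (fun x : ι × n => u x.1 * v x.2) = fun x => (W *ᵥ u) x.1 * (A *ᵥ v) x.2 := by
  funext x
  simp only [mulVec, dotProduct, kroneckerMap_apply, Fintype.sum_prod_type, Finset.sum_mul_sum]
  exact Finset.sum_congr rfl fun _ _ => Finset.sum_congr rfl fun _ _ => by ring

theorem kronecker_mulVec_const_eq_smul {W : Matrix ι ι R} {A : Matrix n n R} {p : n → R} {μ : R}
    (hW : W *ᵥ 1 = 1) (hA : A *ᵥ p = μ • p) :
    (W ⊗ₖ A) *ᵥ (fun x : ι × n => p x.2) = μ • fun x : ι × n => p x.2 := by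
  have h := kronecker_mulVec_tmul W A 1 p
  simp only [Pi.one_apply, one_mul, hW, hA] at h
  rw [h]
  rfl

/-- The paper's `H̄`: its `i`-th block row is `e_iᵀ ⊗ H i`. -/
def blockDiagRows [DecidableEq ι] {κ : ι → Type*} (H : (i : ι) → Matrix (κ i) n R) :
    Matrix (Σ i, κ i) (ι × n) R :=
  of fun x y => if x.1 = y.1 then H x.1 x.2 y.2 else 0

theorem blockDiagRows_mulVec_const [DecidableEq ι] {κ : ι → Type*}
    (H : (i : ι) → Matrix (κ i) n R) (p : n → R) :
    blockDiagRows H *ᵥ (fun y : ι × n => p y.2) = fun x => (H x.1 *ᵥ p) x.2 := by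
  funext ⟨i, k⟩
  simp only [blockDiagRows, mulVec, dotProduct, of_apply, Fintype.sum_prod_type, ite_mul, zero_mul,
    Finset.sum_ite_irrel, Finset.sum_const_zero, Finset.sum_ite_eq, Finset.mem_univ, if_true]

end Matrix

theorem cmat_mulVec_one {ι : Type*} [Fintype ι] {W : Matrix ι ι ℝ} (hWrow : ∀ i, ∑ j, W i j = 1) :
    cmat W *ᵥ 1 = 1 := by
  funext i
  simpa [cmat, mulVec, dotProduct, hWrow i] using (RingHom.map_mulVec (algebraMap ℝ ℂ) W 1 i).symm

theorem stmt16_general (n m : ℕ) (hm : 0 < m) (r : Fin m → ℕ)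
    (A : Matrix (Fin n) (Fin n) ℝ) (W : Matrix (Fin m) (Fin m) ℝ)
    (H : (i : Fin m) → Matrix (Fin (r i)) (Fin n) ℝ)
    (hWrow : ∀ i, ∑ j, W i j = 1)
    (μ : ℂ)
    (p : Fin n → ℂ) (hp : p ≠ 0)
    (hAp : (cmat A).mulVec p = μ • p)
    (hHp : ∀ i, ((H i).map (algebraMap ℝ ℂ)).mulVec p = 0) :
    (fun x : Fin m × Fin n => p x.2) ≠ 0 ∧
    (cmat W ⊗ₖ cmat A).mulVec (fun x : Fin m × Fin n => p x.2) =
      μ • (fun x : Fin m × Fin n => p x.2) ∧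
    (Matrix.of fun (x : Σ i : Fin m, Fin (r i)) (y : Fin m × Fin n) =>
        if x.1 = y.1 then ((H x.1 x.2 y.2 : ℝ) : ℂ) else 0).mulVec
      (fun x : Fin m × Fin n => p x.2) = 0 := by
  have : Nonempty (Fin m) := ⟨⟨0, hm⟩⟩
  refine ⟨fun h => hp ?_, kronecker_mulVec_const_eq_smul (cmat_mulVec_one hWrow) hAp, ?_⟩
  · exact Prod.snd_surjective.injective_comp_right h
  · exact (blockDiagRows_mulVec_const (fun i => (H i).map (algebraMap ℝ ℂ)) p).trans
      (by simp only [hHp]; rfl)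

/-- Necessity: an undetectable unstable mode `(μ, p)` of `(A, H)` lifts, for any
row-stochastic weight matrix `W`, to the undetectable unstable mode `(μ, 𝟙 ⊗ p)` of the
pair `(W ⊗ A, H̄)`. -/
theorem stmt16 (n m : ℕ) (hm : 0 < m) (r : Fin m → ℕ)
    (A : Matrix (Fin n) (Fin n) ℝ) (W : Matrix (Fin m) (Fin m) ℝ)
    (H : (i : Fin m) → Matrix (Fin (r i)) (Fin n) ℝ)
    (hWpos : ∀ i j, 0 ≤ W i j) (hWrow : ∀ i, ∑ j, W i j = 1)
    (μ : ℂ) (hμ : 1 ≤ ‖μ‖)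
    (p : Fin n → ℂ) (hp : p ≠ 0)
    (hAp : (cmat A).mulVec p = μ • p)
    (hHp : ∀ i, ((H i).map (algebraMap ℝ ℂ)).mulVec p = 0) :
    (fun x : Fin m × Fin n => p x.2) ≠ 0 ∧
    (cmat W ⊗ₖ cmat A).mulVec (fun x : Fin m × Fin n => p x.2) =
      μ • (fun x : Fin m × Fin n => p x.2) ∧
    (Matrix.of fun (x : Σ i : Fin m, Fin (r i)) (y : Fin m × Fin n) =>
        if x.1 = y.1 then ((H x.1 x.2 y.2 : ℝ) : ℂ) else 0).mulVec
      (fun x : Fin m × Fin n => p x.2) = 0 :=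
  stmt16_general n m hm r A W H hWrow μ p hp hAp hHp
end
end
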